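/- arXiv:1005.0816 — 2 statements merged into one kernel-verified Lean document; each statement's English description precedes it below -/
import Mathlib

section
/- There exist absolute constants c1, c2, c3 for which the following holds. Let 1 ≤ α ≤ 2, let N be an integer, and let v ∈ R^N be a vector such that there are A, B > 0 with ( Σ_{i∈I} v_i^2 )^{1/2} ≤ A + B·√|I|·log^{1/α}(eN/|I|) for every nonempty I ⊂ {1,...,N}. If β ≥ c1·B·max{ log^{1/α}(c2·N·B^2/A^2), 1 } and E_β = { i : |v_i| ≥ β }, then |E_β| ≤ max{ 4·A^2/β^2, eN·exp(−(β/(2B))^α) } and ( Σ_{i∈E_β} v_i^2 )^{1/2} ≤ c3·A. -/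
/-!
Write `E = E_β`, `k = |E|` and `u = log (e N / k) ≥ 1`, so that `k = e N e^{-u}`. Applying the
hypothesis to `I = E`, where every coordinate has `|v_i| ≥ β`, gives
`β √k ≤ ‖v_E‖ ≤ A + B √k u^{1/α}`. If the last term is at most `A`, then `β √k ≤ 2A` and
`‖v_E‖ ≤ 2A`. Otherwise `β ≤ 2B u^{1/α}`, i.e. `u ≥ (β / 2B)^α`, which is the bound on `k`.
The lower bound on `β` (with `c₁ = 4`, `c₂ = e`) makes `(β / 2B)^α ≥ 2 log (e N B² / A²)`, hence
`B √(e N) e^{-u/4} ≤ A`, and then `B √k u ≤ B √(e N) e^{-u/4} · u e^{-u/4} ≤ 2A` gives `c₃ = 3`.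
-/

open MeasureTheory
open scoped Classical

noncomputable section

/-- The set of admissible constants in the definition of the ψ_α Orlicz norm. -/
def psiSet {Ω : Type*} [MeasurableSpace Ω] (μ : Measure Ω) (α : ℝ) (f : Ω → ℝ) : Set ℝ :=
  {c : ℝ | 0 < c ∧ ∫ ω, Real.exp (|f ω| ^ α / c ^ α) ∂μ ≤ 2}

/-- The ψ_α Orlicz (quasi-)norm of `f` with respect to `μ`. -/
def psiNorm {Ω : Type*} [MeasurableSpace Ω] (μ : Measure Ω) (α : ℝ) (f : Ω → ℝ) : ℝ :=
  sInf (psiSet μ α f)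

/-- Talagrand's γ₂ functional of a set `T` with respect to a (pseudo)metric `d`. -/
def gamma2 {X : Type*} (T : Set X) (d : X → X → ℝ) : ℝ :=
  sInf {r : ℝ | 0 ≤ r ∧ ∃ A : ℕ → Finset X,
    (∀ s, (A s).Nonempty ∧ ↑(A s) ⊆ T) ∧ (A 0).card = 1 ∧
    (∀ s, (A s).card ≤ 2 ^ 2 ^ s) ∧
    ∀ t ∈ T, ∀ n : ℕ,
      ∑ s ∈ Finset.range n, (2 : ℝ) ^ ((s : ℝ) / 2) * sInf (d t '' ↑(A s)) ≤ r}

/-- The ψ₂ distance between two functions. -/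
def psi2Dist {Ω : Type*} [MeasurableSpace Ω] (μ : Measure Ω) (f g : Ω → ℝ) : ℝ :=
  psiNorm μ 2 (fun ω => f ω - g ω)

/-- γ₂(F, ψ₂): the γ₂ functional of a class of functions with the ψ₂ metric. -/
def gamma2Psi2 {Ω : Type*} [MeasurableSpace Ω] (μ : Measure Ω) (F : Set (Ω → ℝ)) : ℝ :=
  gamma2 F (psi2Dist μ)

/-- d_{ψα}: the ψ_α diameter of a class, `sup_{f ∈ F} ‖f‖_{ψα}`. -/
def dPsi {Ω : Type*} [MeasurableSpace Ω] (μ : Measure Ω) (α : ℝ) (F : Set (Ω → ℝ)) : ℝ :=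
  sSup (psiNorm μ α '' F)

/-- A class of measurable, integrable, mean-zero functions. -/
def MeanZero {Ω : Type*} [MeasurableSpace Ω] (μ : Measure Ω) (F : Set (Ω → ℝ)) : Prop :=
  ∀ f ∈ F, Measurable f ∧ Integrable f μ ∧ ∫ ω, f ω ∂μ = 0

/-- Every function of the class has a finite ψ₂ norm. -/
def FinitePsi2 {Ω : Type*} [MeasurableSpace Ω] (μ : Measure Ω) (F : Set (Ω → ℝ)) : Prop :=
  ∀ f ∈ F, (psiSet μ 2 f).Nonempty

/-- `X 1, ..., X N` are independent, distributed according to `μ`. -/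
def IIDSample {Ω Ω' : Type*} [MeasurableSpace Ω] [MeasurableSpace Ω']
    (μ : Measure Ω) (P : Measure Ω') {N : ℕ} (X : Fin N → Ω' → Ω) : Prop :=
  (∀ i, Measurable (X i)) ∧
  ProbabilityTheory.iIndepFun X P ∧
  ∀ i, Measure.map (X i) P = μ

open Real Finset

lemma two_mul_le_rpow_of_two_mul_max_le {α x b : ℝ} (hα : 1 ≤ α)
    (h : 2 * max (x ^ (1 / α)) 1 ≤ b) : 2 * x ≤ b ^ α := by
  set M := max (x ^ (1 / α)) 1
  have hM : 1 ≤ M := le_max_right _ _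
  have hα0 : 0 < α := by linarith
  have hxM : x ≤ M ^ α := by
    rcases le_or_gt x 0 with hx | hx
    · exact hx.trans (by positivity)
    · calc x = (x ^ α⁻¹) ^ α := (rpow_inv_rpow hx.le hα0.ne').symm
        _ ≤ M ^ α := by rw [← one_div]; gcongr; exact le_max_left _ _
  calc 2 * x ≤ 2 * M ^ α := by gcongr
    _ ≤ 2 ^ α * M ^ α := by
        gcongr
        simpa using rpow_le_rpow_of_exponent_le one_le_two hα
    _ = (2 * M) ^ α := (mul_rpow zero_le_two (by positivity)).symm
    _ ≤ b ^ α := by gcongr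

lemma mul_sqrt_card_le_sqrt_sum_sq {ι : Type*} (s : Finset ι) (f : ι → ℝ) {β : ℝ} (hβ : 0 ≤ β)
    (h : ∀ i ∈ s, β ≤ |f i|) : β * √(#s : ℝ) ≤ √(∑ i ∈ s, f i ^ 2) := by
  have hsum : (#s : ℝ) * β ^ 2 ≤ ∑ i ∈ s, f i ^ 2 := by
    simpa [nsmul_eq_mul] using card_nsmul_le_sum s (fun i => f i ^ 2) (β ^ 2)
      fun i hi => by simpa using pow_le_pow_left₀ hβ (h i hi) 2
  calc β * √(#s : ℝ) = √(#s * β ^ 2) := by rw [sqrt_mul (by positivity), sqrt_sq hβ, mul_comm]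
    _ ≤ √(∑ i ∈ s, f i ^ 2) := sqrt_le_sqrt hsum

lemma mul_exp_neg_div_four_le_two (u : ℝ) : u * exp (-(u / 4)) ≤ 2 := by
  have h : u ≤ 4 * exp (u / 4 - 1) := by linarith [add_one_le_exp (u / 4 - 1)]
  calc u * exp (-(u / 4)) ≤ 4 * exp (u / 4 - 1) * exp (-(u / 4)) := by gcongr
    _ = 4 * exp (-1) := by rw [mul_assoc, ← exp_add]; ring_nf
    _ ≤ 2 := by rw [exp_neg, ← div_eq_mul_inv, div_le_iff₀ (exp_pos 1)]; linarith [exp_one_gt_d9]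

lemma mul_sqrt_mul_exp_neg_mul_le {A B K u : ℝ} (hA : 0 < A) (hB : 0 < B) (hK : 0 < K)
    (hu : 2 * log (K * B ^ 2 / A ^ 2) ≤ u) : B * √(K * exp (-u)) * u ≤ 2 * A := by
  have hquarter : B * √K * exp (-(u / 4)) ≤ A := by
    have hX : K * B ^ 2 / A ^ 2 ≤ exp (u / 2) :=
      (log_le_iff_le_exp (by positivity)).mp (by linarith)
    rw [div_le_iff₀ (by positivity)] at hX
    refine (pow_le_pow_iff_left₀ (by positivity) hA.le two_ne_zero).mp ?_
    calc (B * √K * exp (-(u / 4))) ^ 2 = K * B ^ 2 * exp (-(u / 2)) := by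
          rw [mul_pow, mul_pow, sq_sqrt hK.le, ← exp_nat_mul]; ring_nf
      _ ≤ exp (u / 2) * A ^ 2 * exp (-(u / 2)) := by gcongr
      _ = A ^ 2 := by rw [mul_comm, ← mul_assoc, ← exp_add]; simp
  have hhalf : √(exp (-u)) = exp (-(u / 4)) * exp (-(u / 4)) := by
    rw [← exp_half, ← exp_add]; ring_nf
  calc B * √(K * exp (-u)) * u = (B * √K * exp (-(u / 4))) * (u * exp (-(u / 4))) := by
        rw [sqrt_mul hK.le, hhalf]; ring
    _ ≤ A * 2 := by
        nlinarith [mul_exp_neg_div_four_le_two u, show 0 ≤ B * √K * exp (-(u / 4)) by positivity]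
    _ = 2 * A := mul_comm _ _

lemma card_and_norm_bound_of_growth {α A B β K k u S : ℝ} (hα : 1 ≤ α) (hA : 0 < A)
    (hB : 0 < B) (hβ : 0 < β) (hK : 0 < K) (hu : 1 ≤ u) (hku : k = K * exp (-u))
    (hβK : 2 * log (K * B ^ 2 / A ^ 2) ≤ (β / (2 * B)) ^ α)
    (hlow : β * √k ≤ S) (hup : S ≤ A + B * √k * u ^ (1 / α)) :
    k ≤ max (4 * A ^ 2 / β ^ 2) (K * exp (-((β / (2 * B)) ^ α))) ∧ S ≤ 3 * A := by
  have hk : 0 ≤ k := hku ▸ by positivity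
  rcases le_or_gt (B * √k * u ^ (1 / α)) A with hsmall | hlarge
  · have h2A : β * √k ≤ 2 * A := by linarith
    refine ⟨le_max_of_le_left ?_, by linarith⟩
    rw [le_div_iff₀ (by positivity)]
    calc k * β ^ 2 = (β * √k) ^ 2 := by rw [mul_pow, sq_sqrt hk]; ring
      _ ≤ (2 * A) ^ 2 := pow_le_pow_left₀ (by positivity) h2A 2
      _ = 4 * A ^ 2 := by ring
  · have hβu : β < 2 * B * u ^ (1 / α) :=
      lt_of_mul_lt_mul_right (by linarith) (sqrt_nonneg k)
    have htu : (β / (2 * B)) ^ α ≤ u := calc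
      (β / (2 * B)) ^ α ≤ (u ^ α⁻¹) ^ α := by
        rw [← one_div]; gcongr; rw [div_le_iff₀ (by positivity)]; linarith
      _ = u := rpow_inv_rpow (by linarith) (by positivity)
    have hroot : u ^ (1 / α) ≤ u := by
      simpa using rpow_le_rpow_of_exponent_le hu ((div_le_one (by positivity)).mpr hα)
    have hmain : B * √k * u ^ (1 / α) ≤ 2 * A := calc
      B * √k * u ^ (1 / α) ≤ B * √(K * exp (-u)) * u := by rw [hku]; gcongr
      _ ≤ 2 * A := mul_sqrt_mul_exp_neg_mul_le hA hB hK (hβK.trans htu)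
    exact ⟨le_max_of_le_right (by rw [hku]; gcongr), by linarith⟩

/-- Lemma 4.3: the coordinates of a vector with regular `ℓ₂` growth on subsets. -/
theorem statement9 :
    ∃ c1 c2 c3 : ℝ, 0 < c1 ∧ 0 < c2 ∧ 0 < c3 ∧
      ∀ (α : ℝ), 1 ≤ α → α ≤ 2 →
      ∀ (N : ℕ), 0 < N →
      ∀ (v : Fin N → ℝ) (A B : ℝ), 0 < A → 0 < B →
        (∀ I : Finset (Fin N), I.Nonempty →
          Real.sqrt (∑ i ∈ I, v i ^ 2) ≤
            A + B * Real.sqrt I.card * Real.log (Real.exp 1 * N / I.card) ^ ((1 : ℝ) / α)) →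
        ∀ β : ℝ,
          c1 * B * max (Real.log (c2 * N * B ^ 2 / A ^ 2) ^ ((1 : ℝ) / α)) 1 ≤ β →
          ((Finset.univ.filter fun i : Fin N => β ≤ |v i|).card : ℝ) ≤
              max (4 * A ^ 2 / β ^ 2)
                (Real.exp 1 * N * Real.exp (-((β / (2 * B)) ^ α))) ∧
          Real.sqrt (∑ i ∈ Finset.univ.filter (fun i : Fin N => β ≤ |v i|), v i ^ 2) ≤
            c3 * A := by
  refine ⟨4, exp 1, 3, by norm_num, exp_pos 1, by norm_num, ?_⟩
  intro α hα1 _ N _ v A B hA hB hv β hβ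
  set E := univ.filter fun i : Fin N => β ≤ |v i|
  have hβpos : 0 < β := by nlinarith [le_max_right (log (exp 1 * N * B ^ 2 / A ^ 2) ^ (1 / α)) 1]
  have hlog : 2 * log (exp 1 * N * B ^ 2 / A ^ 2) ≤ (β / (2 * B)) ^ α :=
    two_mul_le_rpow_of_two_mul_max_le hα1 (by rw [le_div_iff₀ (by positivity)]; linarith)
  rcases E.eq_empty_or_nonempty with hE | hE
  · simp only [hE, card_empty, Nat.cast_zero, sum_empty, sqrt_zero]
    exact ⟨le_max_of_le_left (by positivity), by positivity⟩
  have hk : (0 : ℝ) < #E := by exact_mod_cast hE.card_pos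
  have hkN : (#E : ℝ) ≤ N := by exact_mod_cast (card_le_univ E).trans_eq (Fintype.card_fin N)
  refine card_and_norm_bound_of_growth hα1 hA hB hβpos (by positivity) ?_ ?_ hlog
    (mul_sqrt_card_le_sqrt_sum_sq E v hβpos.le (by simp [E])) (hv E hE)
  · rw [le_log_iff_exp_le (by positivity), le_div_iff₀ hk]; gcongr
  · rw [exp_neg, exp_log (by positivity)]; field_simp
end
end

section
/- There exists an absolute constant c for which the following holds. Let μ be a probability measure on R^n that is unconditional (invariant under all sign changes of the coordinates) and such that for μ-almost every x ∈ R^n, the non-increasing rearrangement (x_j^*)_{j=1}^n of (|x_j|)_{j=1}^n satisfies x_j^* ≤ L·log(en/j) for every 1 ≤ j ≤ n. Then for every θ ∈ R^n, the linear functional ⟨θ,·⟩ satisfies ‖⟨θ,·⟩‖_{ψ2(μ)} ≤ c·L·( Σ_{j=1}^n (θ^2)_j^*·log^2(en/j) )^{1/2}, where ((θ^2)_j^*)_{j=1}^n is the non-increasing rearrangement of (θ_j^2)_{j=1}^n. In particular, sup_{θ ∈ S^{n−1}} ‖⟨θ,·⟩‖_{ψ2(μ)} ≤ c·L·log n. 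-/
open MeasureTheory
open scoped Classical

noncomputable section

/-- The linear functional `⟨x, ·⟩` on `ℝ^n`. -/
def linF {n : ℕ} (x : Fin n → ℝ) : (Fin n → ℝ) → ℝ := fun ω => ∑ j, x j * ω j

/-- A convex body: compact, convex, symmetric, with nonempty interior. -/
def IsConvexBody {n : ℕ} (K : Set (Fin n → ℝ)) : Prop :=
  Convex ℝ K ∧ IsCompact K ∧ (∀ x ∈ K, -x ∈ K) ∧ (interior K).Nonempty

/-- γ₂(K, ψ₂): the γ₂ functional of the class of linear functionals indexed by `K`,
with the ψ₂(μ) metric. -/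
def gamma2K {n : ℕ} (μ : Measure (Fin n → ℝ)) (K : Set (Fin n → ℝ)) : ℝ :=
  gamma2 K (fun x y => psiNorm μ 2 (linF (fun j => x j - y j)))

/-- The Euclidean diameter of a subset of `ℝ^n`. -/
def euclDiam {n : ℕ} (K : Set (Fin n → ℝ)) : ℝ :=
  sSup {d | ∃ x ∈ K, ∃ y ∈ K, d = Real.sqrt (∑ j, (x j - y j) ^ 2)}

/-- `Q₂(μ)`: the equivalence constant between the ψ₂(μ) norm of linear functionals
and the Euclidean norm. -/
def Qconst (n : ℕ) (μ : Measure (Fin n → ℝ)) : ℝ :=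
  sSup {q | ∃ θ : Fin n → ℝ, ∑ j, θ j ^ 2 = 1 ∧ q = psiNorm μ 2 (linF θ)}

/-- The `j`-th (0-indexed) largest value among `(|v i|)_i`:
`rear v j = inf { t ≥ 0 : #{i : |v i| > t} ≤ j }`. -/
def rear {n : ℕ} (v : Fin n → ℝ) (j : ℕ) : ℝ :=
  sInf {t : ℝ | 0 ≤ t ∧ ({i | t < |v i|} : Set (Fin n)).ncard ≤ j}

/-- A measure on `ℝ^n` that is invariant under all sign changes of the coordinates. -/
def Unconditional (n : ℕ) (μ : Measure (Fin n → ℝ)) : Prop :=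
  ∀ ε : Fin n → ℝ, (∀ j, ε j = 1 ∨ ε j = -1) →
    Measure.map (fun x => fun j => ε j * x j) μ = μ

/-!
Conditionally on `x`, unconditionality turns `⟨θ, x⟩` into the Rademacher sum `∑ εⱼ θⱼ xⱼ`.
Since `cosh t ≤ exp (t² / 2)`, its moment generating function is at most `exp (t² ρ² / 2)` with
`ρ² = ∑ θⱼ² xⱼ²`; this bounds its even moments by `k! (e ρ²)ᵏ`, and summing the exponential series
gives `𝔼 exp (⟨θ, x⟩² / (3ρ)²) ≤ 2`. Finally, by the rearrangement inequality
`∑ θⱼ² xⱼ² ≤ ∑ (θ²)ⱼ* (xⱼ*)²`, which the hypothesis on `x*` bounds by `L² ∑ (θ²)ⱼ* log² (en/j)`.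
-/

open Real Finset
open scoped Nat

def boolSign (b : Bool) : ℝ := if b then 1 else -1

/-- Summing over `ε : ι → Bool` is `2 ^ card ι` times averaging over independent Rademacher
signs `boolSign (ε i)`. -/
def signedSum {ι : Type*} [Fintype ι] (a : ι → ℝ) (ε : ι → Bool) : ℝ :=
  ∑ i, boolSign (ε i) * a i

lemma pow_two_mul_le_factorial_mul_cosh (x : ℝ) (k : ℕ) : x ^ (2 * k) ≤ (2 * k)! * cosh x := by
  have h : x ^ (2 * k) / (2 * k)! ≤ cosh x :=
    le_hasSum (hasSum_cosh x) k fun j _ => by positivity [(even_two_mul j).pow_nonneg x]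
  rwa [div_le_iff₀' (by positivity)] at h

section Rademacher

variable {ι : Type*} [Fintype ι] [DecidableEq ι]

lemma sum_exp_mul_signedSum (a : ι → ℝ) (t : ℝ) :
    ∑ ε : ι → Bool, exp (t * signedSum a ε) = ∏ i, 2 * cosh (t * a i) := by
  have hcosh : ∀ i, 2 * cosh (t * a i) = ∑ b : Bool, exp (t * (boolSign b * a i)) := fun i => by
    simp [boolSign, cosh_eq]; ring
  simp only [hcosh, Fintype.prod_sum, signedSum, mul_sum, exp_sum]

lemma sum_exp_mul_signedSum_le (a : ι → ℝ) (t : ℝ) :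
    ∑ ε : ι → Bool, exp (t * signedSum a ε) ≤
      2 ^ Fintype.card ι * exp (t ^ 2 * (∑ i, a i ^ 2) / 2) := by
  rw [sum_exp_mul_signedSum]
  calc ∏ i, 2 * cosh (t * a i) ≤ ∏ i, 2 * exp ((t * a i) ^ 2 / 2) :=
        prod_le_prod (fun i _ => by positivity) fun i _ => by
          gcongr; exact cosh_le_exp_half_sq _
    _ = 2 ^ Fintype.card ι * exp (t ^ 2 * (∑ i, a i ^ 2) / 2) := by
        rw [prod_mul_distrib, prod_const, Finset.card_univ, ← exp_sum, mul_sum, sum_div]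
        simp only [mul_pow]

lemma sum_cosh_mul_signedSum_le (a : ι → ℝ) (t : ℝ) :
    ∑ ε : ι → Bool, cosh (t * signedSum a ε) ≤
      2 ^ Fintype.card ι * exp (t ^ 2 * (∑ i, a i ^ 2) / 2) := by
  have hpos := sum_exp_mul_signedSum_le a t
  have hneg := sum_exp_mul_signedSum_le a (-t)
  simp only [cosh_eq, ← sum_div, sum_add_distrib, neg_mul, neg_sq] at hneg ⊢
  linarith

lemma sum_signedSum_pow_le (a : ι → ℝ) {ρ : ℝ} (hρ : 0 < ρ) (ha : ∑ i, a i ^ 2 ≤ ρ ^ 2)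
    (k : ℕ) :
    ∑ ε : ι → Bool, signedSum a ε ^ (2 * k) ≤ 2 ^ Fintype.card ι * k ! * (exp 1 * ρ ^ 2) ^ k := by
  rcases Nat.eq_zero_or_pos k with rfl | hk
  · simp
  set t := √(2 * k) / ρ
  have ht : t ^ 2 = 2 * k / ρ ^ 2 := by rw [div_pow, sq_sqrt (by positivity)]
  have hexp : exp (t ^ 2 * ρ ^ 2 / 2) = exp 1 ^ k := by
    rw [ht, ← exp_nat_mul]; congr 1; field_simp
  have hmom : (2 * k / ρ ^ 2) ^ k * ∑ ε : ι → Bool, signedSum a ε ^ (2 * k) ≤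
      (2 * k)! * (2 ^ Fintype.card ι * exp 1 ^ k) := calc
    _ = ∑ ε : ι → Bool, (t * signedSum a ε) ^ (2 * k) := by
        rw [mul_sum, ← ht]; simp only [mul_pow, pow_mul]
    _ ≤ ∑ ε : ι → Bool, (2 * k)! * cosh (t * signedSum a ε) :=
        sum_le_sum fun ε _ => pow_two_mul_le_factorial_mul_cosh _ k
    _ ≤ (2 * k)! * (2 ^ Fintype.card ι * exp (t ^ 2 * ρ ^ 2 / 2)) := by
        rw [← mul_sum]
        gcongr
        refine (sum_cosh_mul_signedSum_le a t).trans ?_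
        gcongr
    _ = _ := by rw [hexp]
  have hfact : ((2 * k)! : ℝ) ≤ (2 * k) ^ k * k ! := by exact_mod_cast Nat.factorial_two_mul_le k
  refine le_of_mul_le_mul_left (hmom.trans ?_) (by positivity)
  calc ((2 * k)! : ℝ) * (2 ^ Fintype.card ι * exp 1 ^ k)
      ≤ (2 * k) ^ k * k ! * (2 ^ Fintype.card ι * exp 1 ^ k) := by gcongr
    _ = (2 * k / ρ ^ 2) ^ k * (2 ^ Fintype.card ι * k ! * (exp 1 * ρ ^ 2) ^ k) := by
        rw [div_pow, mul_pow]; field_simp; ring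

lemma sum_exp_sq_signedSum_le (a : ι → ℝ) {ρ : ℝ} (hρ : 0 < ρ) (ha : ∑ i, a i ^ 2 ≤ ρ ^ 2) :
    ∑ ε : ι → Bool, exp (signedSum a ε ^ 2 / (3 * ρ) ^ 2) ≤ 2 * 2 ^ Fintype.card ι := by
  -- The `k`-th term of the exponential series is at most `2 ^ card ι * (e / 9) ^ k`.
  set q := exp 1 / 9
  have hq₀ : 0 ≤ q := by positivity
  have hq₁ : q ≤ 1 / 2 := by have := exp_one_lt_d9; norm_num [q]; linarith
  have hseries : HasSum (fun k : ℕ => ∑ ε : ι → Bool, (signedSum a ε ^ 2 / (3 * ρ) ^ 2) ^ k / k !)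
      (∑ ε : ι → Bool, exp (signedSum a ε ^ 2 / (3 * ρ) ^ 2)) :=
    hasSum_sum fun ε _ => by
      rw [exp_eq_exp_ℝ]; exact NormedSpace.expSeries_div_hasSum_exp _
  have hterm : ∀ k : ℕ, ∑ ε : ι → Bool, (signedSum a ε ^ 2 / (3 * ρ) ^ 2) ^ k / k ! ≤
      2 ^ Fintype.card ι * q ^ k := fun k => by
    simp only [div_pow, ← pow_mul, ← sum_div]
    rw [div_div, div_le_iff₀ (by positivity)]
    refine (sum_signedSum_pow_le a hρ ha k).trans_eq ?_
    rw [pow_mul, mul_pow, div_pow, mul_pow]; field_simp; norm_num; rw [mul_pow]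
  have hgeom := (hasSum_geometric_of_lt_one hq₀ (by linarith)).mul_left (2 ^ Fintype.card ι)
  refine (hasSum_le hterm hseries hgeom).trans ?_
  have : (1 - q)⁻¹ ≤ 2 := by rw [inv_le_comm₀ (by linarith) two_pos]; linarith
  rw [mul_comm 2]; gcongr

end Rademacher

section Rearrangement

variable {n : ℕ}

lemma rear_nonneg (v : Fin n → ℝ) (j : ℕ) : 0 ≤ rear v j :=
  Real.sInf_nonneg fun _ ht => ht.1

lemma rear_eq_of_antitone (v : Fin n → ℝ) (σ : Equiv.Perm (Fin n))
    (hσ : Antitone fun j => |v (σ j)|) (j : Fin n) : rear v j = |v (σ j)| := by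
  set w := fun j => |v (σ j)|
  have himage (t : ℝ) : {i | t < |v i|} = σ '' {k | t < w k} := by
    ext i; exact ⟨fun hi => ⟨σ.symm i, by simpa [w] using hi, σ.apply_symm_apply i⟩,
      by rintro ⟨k, hk, rfl⟩; exact hk⟩
  have hmem : 0 ≤ w j ∧ ({i | w j < |v i|} : Set (Fin n)).ncard ≤ j := by
    refine ⟨abs_nonneg _, ?_⟩
    rw [himage, Set.ncard_image_of_injective _ σ.injective]
    calc {k | w j < w k}.ncard ≤ (Set.Iio j).ncard :=
          Set.ncard_le_ncard (fun k hk => lt_of_not_ge fun h => (hσ h).not_gt hk)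
      _ = j := by rw [← Finset.coe_Iio, Set.ncard_coe_finset, Fin.card_Iio]
  refine le_antisymm (csInf_le ⟨0, fun _ ht => ht.1⟩ hmem) (le_csInf ⟨w j, hmem⟩ ?_)
  rintro t ⟨-, hcard⟩
  by_contra! hlt
  have hsub : Set.Iic j ⊆ {k | t < w k} := fun k hk => hlt.trans_le (hσ hk)
  have := Set.ncard_le_ncard hsub
  rw [← Finset.coe_Iic, Set.ncard_coe_finset, Fin.card_Iic, ← Set.ncard_image_of_injective _
    σ.injective, ← himage] at this
  omega

lemma exists_perm_rear_eq (v : Fin n → ℝ) :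
    ∃ σ : Equiv.Perm (Fin n), Antitone (fun j => |v (σ j)|) ∧ ∀ j : Fin n, rear v j = |v (σ j)| := by
  set σ := Tuple.sort fun i => -|v i|
  have hσ : Antitone fun j => |v (σ j)| := fun i j hij => by
    simpa using Tuple.monotone_sort (fun i => -|v i|) hij
  exact ⟨σ, hσ, rear_eq_of_antitone v σ hσ⟩

lemma sum_rear_sq (v : Fin n → ℝ) : ∑ j : Fin n, rear v j ^ 2 = ∑ i, v i ^ 2 := by
  obtain ⟨σ, -, hσ⟩ := exists_perm_rear_eq v
  simp only [hσ, sq_abs]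
  exact Equiv.sum_comp σ fun i => v i ^ 2

lemma sum_sq_mul_le_sum_rear_sq_mul (θ x : Fin n → ℝ) :
    ∑ i, (θ i * x i) ^ 2 ≤ ∑ j : Fin n, rear θ j ^ 2 * rear x j ^ 2 := by
  obtain ⟨σ, hσa, hσ⟩ := exists_perm_rear_eq θ
  obtain ⟨τ, hτa, hτ⟩ := exists_perm_rear_eq x
  set A := fun j => |θ (σ j)| ^ 2
  set B := fun j => |x (τ j)| ^ 2
  have hA : Antitone A := fun i j hij => pow_le_pow_left₀ (abs_nonneg _) (hσa hij) 2
  have hB : Antitone B := fun i j hij => pow_le_pow_left₀ (abs_nonneg _) (hτa hij) 2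
  calc ∑ i, (θ i * x i) ^ 2 = ∑ j, A j * B ((σ.trans τ.symm) j) := by
        rw [← Equiv.sum_comp σ]
        simp [A, B, mul_pow]
    _ ≤ ∑ j, A j * B j := (hA.monovary hB).sum_mul_comp_perm_le_sum_mul
    _ = ∑ j : Fin n, rear θ j ^ 2 * rear x j ^ 2 := by simp [A, B, hσ, hτ]

end Rearrangement

def flipSigns {n : ℕ} (ε : Fin n → Bool) (x : Fin n → ℝ) : Fin n → ℝ :=
  fun j => boolSign (ε j) * x j

lemma measurable_flipSigns {n : ℕ} (ε : Fin n → Bool) : Measurable (flipSigns ε) :=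
  measurable_pi_lambda _ fun j => (measurable_pi_apply j).const_mul _

lemma linF_flipSigns {n : ℕ} (θ : Fin n → ℝ) (ε : Fin n → Bool) (x : Fin n → ℝ) :
    linF θ (flipSigns ε x) = signedSum (fun j => θ j * x j) ε := by
  simp only [linF, flipSigns, signedSum, mul_left_comm]

@[fun_prop]
lemma measurable_linF {n : ℕ} (θ : Fin n → ℝ) : Measurable (linF θ) :=
  Finset.measurable_sum _ fun j _ => by fun_prop

lemma psiNorm_two_le {Ω : Type*} [MeasurableSpace Ω] {μ : Measure Ω} {f : Ω → ℝ} {C : ℝ}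
    (hC : 0 < C) (h : ∫ ω, exp (f ω ^ 2 / C ^ 2) ∂μ ≤ 2) : psiNorm μ 2 f ≤ C :=
  csInf_le ⟨0, fun _ hc => hc.1.le⟩ ⟨hC, by simpa only [Real.rpow_two, sq_abs] using h⟩

namespace Unconditional

variable {n : ℕ} {μ : Measure (Fin n → ℝ)}

lemma map_flipSigns (hU : Unconditional n μ) (ε : Fin n → Bool) :
    μ.map (flipSigns ε) = μ :=
  hU _ fun j => by cases ε j <;> simp [boolSign]

lemma integral_le_of_sum_flipSigns_le [IsProbabilityMeasure μ] (hU : Unconditional n μ)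
    {g : (Fin n → ℝ) → ℝ} (hg : Measurable g) {C : ℝ} (hC : 0 ≤ C)
    (h : ∀ᵐ x ∂μ, ∑ ε : Fin n → Bool, g (flipSigns ε x) ≤ 2 ^ n * C) : ∫ x, g x ∂μ ≤ C := by
  by_cases hint : Integrable g μ
  swap
  · rwa [integral_undef hint]
  have hflip (ε : Fin n → Bool) : ∫ x, g (flipSigns ε x) ∂μ = ∫ x, g x ∂μ := by
    conv_rhs => rw [← hU.map_flipSigns ε]
    exact (integral_map (measurable_flipSigns ε).aemeasurable
      (by rw [hU.map_flipSigns]; exact hg.aestronglyMeasurable)).symm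
  have hint' (ε : Fin n → Bool) : Integrable (fun x => g (flipSigns ε x)) μ := by
    rw [← hU.map_flipSigns ε] at hint
    exact hint.comp_measurable (measurable_flipSigns ε)
  have hsum : 2 ^ n * ∫ x, g x ∂μ = ∫ x, ∑ ε : Fin n → Bool, g (flipSigns ε x) ∂μ := by
    simp [integral_finsetSum _ fun ε _ => hint' ε, hflip]
  have := integral_mono_ae (integrable_finsetSum _ fun ε _ => hint' ε)
    (integrable_const (2 ^ n * C)) h
  simp only [integral_const, probReal_univ, one_smul] at this
  exact le_of_mul_le_mul_left (hsum ▸ this) (by positivity)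

lemma integral_exp_sq_linF_le [IsProbabilityMeasure μ] (hU : Unconditional n μ)
    {θ : Fin n → ℝ} {ρ : ℝ} (hρ : 0 < ρ) (h : ∀ᵐ x ∂μ, ∑ j, (θ j * x j) ^ 2 ≤ ρ ^ 2) :
    ∫ x, exp (linF θ x ^ 2 / (3 * ρ) ^ 2) ∂μ ≤ 2 := by
  refine hU.integral_le_of_sum_flipSigns_le (by fun_prop) zero_le_two ?_
  filter_upwards [h] with x hx
  simpa only [linF_flipSigns, Fintype.card_fin, mul_comm (2 ^ n : ℝ)] using
    sum_exp_sq_signedSum_le _ hρ hx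

lemma psiNorm_linF_le [IsProbabilityMeasure μ] (hU : Unconditional n μ)
    {θ : Fin n → ℝ} {ρ : ℝ} (hρ : 0 ≤ ρ) (h : ∀ᵐ x ∂μ, ∑ j, (θ j * x j) ^ 2 ≤ ρ ^ 2) :
    psiNorm μ 2 (linF θ) ≤ 3 * ρ := by
  refine le_of_forall_pos_le_add fun δ hδ => ?_
  have hρ' : 0 < ρ + δ / 3 := by positivity
  have h' : ∀ᵐ x ∂μ, ∑ j, (θ j * x j) ^ 2 ≤ (ρ + δ / 3) ^ 2 :=
    h.mono fun x hx => hx.trans (by gcongr; linarith)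
  calc psiNorm μ 2 (linF θ) ≤ 3 * (ρ + δ / 3) :=
        psiNorm_two_le (by positivity) (hU.integral_exp_sq_linF_le hρ' h')
    _ = 3 * ρ + δ := by ring

end Unconditional

lemma sum_sq_mul_le_of_rear_le {n : ℕ} (θ : Fin n → ℝ) {x w : Fin n → ℝ} {L : ℝ}
    (hx : ∀ j : Fin n, rear x j ≤ L * w j) :
    ∑ j, (θ j * x j) ^ 2 ≤ L ^ 2 * ∑ j : Fin n, rear θ j ^ 2 * w j ^ 2 := by
  refine (sum_sq_mul_le_sum_rear_sq_mul θ x).trans ?_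
  rw [mul_sum]
  refine sum_le_sum fun j _ => ?_
  calc rear θ j ^ 2 * rear x j ^ 2 ≤ rear θ j ^ 2 * (L * w j) ^ 2 := by
        gcongr
        · exact rear_nonneg x j
        · exact hx j
    _ = L ^ 2 * (rear θ j ^ 2 * w j ^ 2) := by ring

lemma sum_rear_sq_mul_sq_le {n : ℕ} (θ : Fin n → ℝ) {w : Fin n → ℝ} {M : ℝ}
    (hw : ∀ j, |w j| ≤ M) :
    ∑ j : Fin n, rear θ j ^ 2 * w j ^ 2 ≤ M ^ 2 * ∑ i, θ i ^ 2 := by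
  rw [← sum_rear_sq, mul_sum]
  refine sum_le_sum fun j _ => ?_
  rw [mul_comm, ← sq_abs (w j)]
  gcongr
  exact hw j

lemma abs_log_exp_one_mul_div_le {n j : ℕ} (hj : j < n) :
    |log (exp 1 * n / (j + 1))| ≤ 1 + log n := by
  have hjn : (j : ℝ) + 1 ≤ n := by exact_mod_cast hj
  have hn : (0 : ℝ) < n := by linarith [(j.cast_nonneg : (0 : ℝ) ≤ j)]
  have hlower : 1 ≤ exp 1 * n / (j + 1) := by
    rw [le_div_iff₀ (by positivity)]
    nlinarith [add_one_le_exp (1 : ℝ)]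
  rw [abs_of_nonneg (log_nonneg hlower)]
  calc log (exp 1 * n / (j + 1)) ≤ log (exp 1 * n) :=
        log_le_log (by linarith) (div_le_self (by positivity) (by simp))
    _ = 1 + log n := by rw [log_mul (exp_ne_zero 1) hn.ne', log_exp]

/-- ψ₂ estimates for linear functionals under an unconditional measure with
logarithmically decaying coordinates. -/
theorem statement18 :
    ∃ c : ℝ, 0 < c ∧
      ∀ (n : ℕ) (μ : Measure (Fin n → ℝ)) [IsProbabilityMeasure μ] (L : ℝ),
        2 ≤ n → 0 < L → Unconditional n μ →
        (∀ᵐ x ∂μ, ∀ j : Fin n,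
          rear x j.val ≤ L * Real.log (Real.exp 1 * n / ((j.val : ℝ) + 1))) →
        (∀ θ : Fin n → ℝ,
          psiNorm μ 2 (linF θ) ≤
            c * L * Real.sqrt (∑ j : Fin n,
              (rear θ j.val) ^ 2 * Real.log (Real.exp 1 * n / ((j.val : ℝ) + 1)) ^ 2)) ∧
        ∀ θ : Fin n → ℝ, ∑ j, θ j ^ 2 = 1 →
          psiNorm μ 2 (linF θ) ≤ c * L * Real.log n := by
  refine ⟨9, by norm_num, fun n μ _ L hn hL hU hx => ?_⟩
  set w : Fin n → ℝ := fun j => log (exp 1 * n / ((j.val : ℝ) + 1))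
  have hbound (θ : Fin n → ℝ) :
      psiNorm μ 2 (linF θ) ≤ 3 * L * √(∑ j : Fin n, rear θ j ^ 2 * w j ^ 2) := by
    have hS : 0 ≤ ∑ j : Fin n, rear θ j ^ 2 * w j ^ 2 := by positivity
    rw [mul_assoc]
    refine hU.psiNorm_linF_le (by positivity) (hx.mono fun x hx => ?_)
    rw [mul_pow, sq_sqrt hS]
    exact sum_sq_mul_le_of_rear_le θ hx
  refine ⟨fun θ => (hbound θ).trans (by gcongr; norm_num), fun θ hθ => (hbound θ).trans ?_⟩
  have hw : √(∑ j : Fin n, rear θ j ^ 2 * w j ^ 2) ≤ 1 + log n := by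
    refine sqrt_le_iff.mpr ⟨by positivity, ?_⟩
    simpa [hθ] using sum_rear_sq_mul_sq_le θ fun j => abs_log_exp_one_mul_div_le j.isLt
  have hlog : 1 ≤ 2 * log n := by
    have : log 2 ≤ log n := log_le_log two_pos (by exact_mod_cast hn)
    linarith [log_two_gt_d9]
  calc 3 * L * √(∑ j : Fin n, rear θ j ^ 2 * w j ^ 2) ≤ 3 * L * (1 + log n) := by gcongr
    _ ≤ 9 * L * log n := by nlinarith
end
end
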